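/- Let f, g ∈ ℚ[x_1,...,x_n] each be expressible as a sum of products of homogeneous linear forms: f = Σ_{i=1}^s ∏_{j=1}^d L_{i,j} and g = Σ_{i=1}^{s'} ∏_{j=1}^d L'_{i,j}. Then the scaled Hadamard product f ∘ˢ g is expressible as a sum of at most 2^d · s · s' products, each a product of d homogeneous linear forms. -/

import Mathlib

/-!
By bilinearity of `∘ˢ` it suffices to treat `f = ∏ Lᵢ` and `g = ∏ L'ⱼ`. The identity
`(xᵢ f) ∘ˢ g = xᵢ (f ∘ˢ ∂ᵢ g)` combined with the Leibniz rule for `∂ᵢ (∏ L'ⱼ)` is a Laplace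
expansion, so `(∏ Lᵢ) ∘ˢ (∏ L'ⱼ)` is the permanent of the matrix `Lᵢ ∘ˢ L'ⱼ = ∑ₖ aᵢₖ bⱼₖ xₖ`.
Ryser's formula writes a `d × d` permanent as a signed sum over `2 ^ d` subsets `S` of products of
`d` row sums; each row sum is again a linear form, and the sign `(-1) ^ #Sᶜ` is distributed over
the factors as `∏ⱼ (±1)`.
-/

open MvPolynomial

/-- The linear form `L = ∑ i, a i * x i`. -/
noncomputable def lin {n : ℕ} (a : Fin n → ℚ) : MvPolynomial (Fin n) ℚ :=
  ∑ i, MvPolynomial.C (a i) * MvPolynomial.X i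

/-- `m! = e₁! ⋯ e_r!` for a monomial exponent vector `m`. -/
def mfact {n : ℕ} (m : Fin n →₀ ℕ) : ℕ := m.prod fun _ e => e.factorial

/-- The scaled Hadamard product `f ∘ˢ g = ∑ m, (m! · [m]f · [m]g) · m`. -/
noncomputable def shad {n : ℕ} (f g : MvPolynomial (Fin n) ℚ) :
    MvPolynomial (Fin n) ℚ :=
  ∑ m ∈ f.support,
    MvPolynomial.monomial m ((mfact m : ℚ) * f.coeff m * g.coeff m)

open Finset Equiv

section ShadBasics

variable {n : ℕ}

lemma mfact_eq_prod (m : Fin n →₀ ℕ) : mfact m = ∏ i, (m i).factorial :=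
  Finsupp.prod_fintype _ _ fun _ => rfl

lemma mfact_add_single (m : Fin n →₀ ℕ) (i : Fin n) :
    mfact (m + Finsupp.single i 1) = (m i + 1) * mfact m := by
  rw [mfact_eq_prod, mfact_eq_prod, Fintype.prod_eq_mul_prod_compl i,
    Fintype.prod_eq_mul_prod_compl i, ← mul_assoc]
  congr 1
  · simp [Nat.factorial_succ]
  · refine prod_congr rfl fun k hk => ?_
    rw [Finsupp.add_apply, Finsupp.single_eq_of_ne (by simpa using hk), add_zero]

lemma coeff_shad (f g : MvPolynomial (Fin n) ℚ) (m : Fin n →₀ ℕ) :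
    (shad f g).coeff m = mfact m * f.coeff m * g.coeff m := by
  rw [shad, coeff_sum]
  by_cases hm : m ∈ f.support
  · rw [sum_eq_single m (fun m' _ hm' => by simp [coeff_monomial, hm']) (absurd hm)]
    simp
  · rw [sum_eq_zero fun m' hm' => by simp [coeff_monomial, ne_of_mem_of_not_mem hm' hm],
      notMem_support_iff.mp hm]
    simp

lemma shad_sum_left {α : Type*} (s : Finset α) (f : α → MvPolynomial (Fin n) ℚ)
    (g : MvPolynomial (Fin n) ℚ) : shad (∑ i ∈ s, f i) g = ∑ i ∈ s, shad (f i) g := by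
  ext m
  simp [coeff_shad, coeff_sum, sum_mul, mul_sum]

lemma shad_sum_right {α : Type*} (s : Finset α) (f : MvPolynomial (Fin n) ℚ)
    (g : α → MvPolynomial (Fin n) ℚ) : shad f (∑ i ∈ s, g i) = ∑ i ∈ s, shad f (g i) := by
  ext m
  simp [coeff_shad, coeff_sum, mul_sum]

lemma shad_C_mul_left (c : ℚ) (f g : MvPolynomial (Fin n) ℚ) :
    shad (C c * f) g = C c * shad f g := by
  ext m
  simp only [coeff_shad, coeff_C_mul]
  ring

lemma shad_C_mul_right (c : ℚ) (f g : MvPolynomial (Fin n) ℚ) :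
    shad f (C c * g) = C c * shad f g := by
  ext m
  simp only [coeff_shad, coeff_C_mul]
  ring

lemma shad_one_one : shad (1 : MvPolynomial (Fin n) ℚ) 1 = 1 := by
  ext m
  rw [coeff_shad, coeff_one]
  split_ifs with hm
  · simp [← hm, mfact]
  · simp

/-- Since `(m + eᵢ)! = (mᵢ + 1) · m!`, multiplication by `xᵢ` on the left is adjoint to `∂ᵢ` on
the right. -/
lemma shad_X_mul (i : Fin n) (f g : MvPolynomial (Fin n) ℚ) :
    shad (X i * f) g = X i * shad f (pderiv i g) := by
  ext m
  rw [coeff_shad, coeff_X_mul', coeff_X_mul']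
  split_ifs with hi
  · obtain ⟨m, rfl⟩ : ∃ m', m = m' + Finsupp.single i 1 :=
      ⟨_, (tsub_add_cancel_of_le (Finsupp.single_le_iff.mpr
        (Nat.one_le_iff_ne_zero.mpr (Finsupp.mem_support_iff.mp hi)))).symm⟩
    rw [add_tsub_cancel_right, coeff_shad, coeff_pderiv, mfact_add_single]
    push_cast
    ring
  · simp

end ShadBasics

lemma Fin.prod_univ_erase_eq_prod_swap_succ {M : Type*} [CommMonoid M] {d : ℕ}
    (p : Fin (d + 1)) (f : Fin (d + 1) → M) :
    ∏ k ∈ univ.erase p, f k = ∏ i : Fin d, f (swap 0 p i.succ) := by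
  have hsucc : univ.map (Fin.succEmb d) = univ.erase 0 := by
    rw [Fin.univ_succ, erase_cons]; rfl
  have hswap : (univ.erase 0).map (swap 0 p).toEmbedding = univ.erase p := by
    rw [map_erase, map_univ_equiv, Equiv.coe_toEmbedding, swap_apply_left]
  rw [← hswap, prod_map, ← hsucc, prod_map]
  rfl

theorem Derivation.leibniz_prod {R A M : Type*} [CommSemiring R] [CommSemiring A]
    [AddCommMonoid M] [Algebra R A] [Module A M] [Module R M] (D : Derivation R A M)
    {ι : Type*} [DecidableEq ι] (s : Finset ι) (f : ι → A) :
    D (∏ k ∈ s, f k) = ∑ p ∈ s, (∏ k ∈ s.erase p, f k) • D (f p) := by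
  induction s using Finset.induction_on with
  | empty => simp
  | insert q s hq ih =>
    rw [prod_insert hq, D.leibniz, ih, sum_insert hq, erase_insert hq, smul_sum, add_comm]
    congr 1
    refine sum_congr rfl fun p hp => ?_
    rw [erase_insert_of_ne (ne_of_mem_of_not_mem hp hq).symm, prod_insert (by simp [hq]),
      mul_smul]

section LinearForms

variable {n : ℕ}

lemma pderiv_lin (i : Fin n) (a : Fin n → ℚ) : pderiv i (lin a) = C (a i) := by
  simp [lin, pderiv_X, Pi.single_apply]

lemma pderiv_prod_lin {d : ℕ} (i : Fin n) (b : Fin (d + 1) → Fin n → ℚ) :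
    pderiv i (∏ k, lin (b k)) = ∑ p, C (b p i) * ∏ j : Fin d, lin (b (swap 0 p j.succ)) := by
  simp only [Derivation.leibniz_prod, pderiv_lin, smul_eq_mul,
    Fin.prod_univ_erase_eq_prod_swap_succ, mul_comm]

lemma shad_lin_mul (c : Fin n → ℚ) (f g : MvPolynomial (Fin n) ℚ) :
    shad (lin c * f) g = ∑ i, C (c i) * (X i * shad f (pderiv i g)) := by
  simp only [lin, sum_mul, shad_sum_left, mul_assoc, shad_C_mul_left, shad_X_mul]

/-- The Laplace expansion of the permanent along its first row. -/
lemma shad_lin_mul_prod_lin {d : ℕ} (c : Fin n → ℚ) (f : MvPolynomial (Fin n) ℚ)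
    (b : Fin (d + 1) → Fin n → ℚ) :
    shad (lin c * f) (∏ k, lin (b k)) =
      ∑ p, lin (c * b p) * shad f (∏ j : Fin d, lin (b (swap 0 p j.succ))) := by
  simp only [shad_lin_mul, pderiv_prod_lin, shad_sum_right, shad_C_mul_right, mul_sum]
  rw [sum_comm]
  refine sum_congr rfl fun p _ => ?_
  rw [lin, sum_mul]
  refine sum_congr rfl fun i _ => ?_
  rw [Pi.mul_apply, map_mul]
  ring

end LinearForms

section Ryser

variable {α R : Type*} [Fintype α] [DecidableEq α] [CommRing R]

lemma Finset.sum_superset_neg_one_pow_card_compl (T : Finset α) :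
    ∑ S : Finset α with T ⊆ S, (-1 : R) ^ #Sᶜ = if T = univ then 1 else 0 := by
  have hcompl : ∑ S : Finset α with T ⊆ S, (-1 : R) ^ #Sᶜ = ∑ U ∈ Tᶜ.powerset, (-1 : R) ^ #U :=
    sum_nbij' compl compl (by simp) (by simp [subset_compl_comm]) (by simp) (by simp) (by simp)
  rw [hcompl, if_congr (compl_eq_empty_iff T).symm rfl rfl]
  exact_mod_cast congrArg (Int.cast : ℤ → R) sum_powerset_neg_one_pow_card

lemma Equiv.Perm.sum_coe_eq_sum_bijective {M : Type*} [AddCommMonoid M] (F : (α → α) → M) :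
    ∑ σ : Perm α, F σ = ∑ φ : α → α with Function.Bijective φ, F φ := by
  rw [sum_subtype _ (fun φ => mem_filter_univ φ), ← bijectiveEquiv.symm.sum_comp]
  rfl

theorem Matrix.permanent_ryser (M : Matrix α α R) :
    M.permanent = ∑ S : Finset α, (-1) ^ #Sᶜ * ∏ j, ∑ i ∈ S, M i j := by
  have hexpand (S : Finset α) : ∏ j, ∑ i ∈ S, M i j =
      ∑ φ : α → α, if univ.image φ ⊆ S then ∏ j, M (φ j) j else 0 := by
    rw [prod_univ_sum, ← sum_filter]
    exact sum_congr (by ext; simp [Fintype.mem_piFinset, image_subset_iff]) fun _ _ => rfl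
  have hsign (φ : α → α) :
      ∑ S : Finset α, (if univ.image φ ⊆ S then (-1 : R) ^ #Sᶜ else 0) =
        if Function.Bijective φ then 1 else 0 := by
    rw [← sum_filter, sum_superset_neg_one_pow_card_compl]
    refine if_congr ?_ rfl rfl
    simp only [eq_univ_iff_forall, mem_image, mem_univ, true_and]
    exact Finite.surjective_iff_bijective
  simp only [hexpand, mul_sum, mul_ite, mul_zero]
  rw [sum_comm, Matrix.permanent, Perm.sum_coe_eq_sum_bijective (fun φ => ∏ j, M (φ j) j),
    sum_filter]
  refine sum_congr rfl fun φ _ => ?_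
  rw [← sum_filter, ← sum_mul, sum_filter, hsign]
  simp

lemma Finset.prod_ite_mem_one_neg_one (S : Finset α) :
    ∏ j, (if j ∈ S then 1 else -1 : R) = (-1) ^ #Sᶜ := by
  rw [prod_ite, prod_const_one, one_mul, prod_const, filter_not, filter_mem_eq_inter,
    univ_inter, compl_eq_univ_sdiff]

end Ryser

section SumsOfProducts

variable {n : ℕ}

lemma lin_sum {ι : Type*} (s : Finset ι) (a : ι → Fin n → ℚ) :
    ∑ k ∈ s, lin (a k) = lin (∑ k ∈ s, a k) := by
  simp only [lin, Finset.sum_apply, map_sum, sum_mul]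
  exact sum_comm

lemma lin_smul (r : ℚ) (a : Fin n → ℚ) : lin (r • a) = C r * lin a := by
  simp only [lin, mul_sum, Pi.smul_apply, smul_eq_mul, map_mul, mul_assoc]

lemma shad_prod_lin_eq_permanent {d : ℕ} (a b : Fin d → Fin n → ℚ) :
    shad (∏ j, lin (a j)) (∏ j, lin (b j)) = (Matrix.of fun i j => lin (a i * b j)).permanent := by
  rw [← Matrix.permanent_transpose, Matrix.permanent]
  induction d with
  | zero => simp [shad_one_one]
  | succ d ih =>
    rw [Fin.prod_univ_succ, shad_lin_mul_prod_lin, ← Perm.decomposeFin.symm.sum_comp,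
      Fintype.sum_prod_type]
    simp only [ih, mul_sum, Fin.prod_univ_succ, Perm.decomposeFin_symm_apply_zero,
      Perm.decomposeFin_symm_apply_succ, Matrix.transpose_apply, Matrix.of_apply]

/-- Ryser's formula with the sign `(-1) ^ #Sᶜ` spread over the `d` factors. -/
lemma shad_prod_lin_eq_sum_prod_lin {d : ℕ} (a b : Fin d → Fin n → ℚ) :
    shad (∏ j, lin (a j)) (∏ j, lin (b j)) =
      ∑ S : Finset (Fin d), ∏ j, lin ((if j ∈ S then 1 else -1 : ℚ) • ((∑ i ∈ S, a i) * b j)) := by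
  rw [shad_prod_lin_eq_permanent, Matrix.permanent_ryser]
  refine sum_congr rfl fun S _ => ?_
  simp only [lin_smul, prod_mul_distrib, ← map_prod, prod_ite_mem_one_neg_one, Matrix.of_apply,
    lin_sum, sum_mul, map_pow, map_neg, map_one]

lemma exists_fin_sum_prod_lin {ι : Type*} [Fintype ι] {d : ℕ} (c : ι → Fin d → Fin n → ℚ) :
    ∃ c' : Fin (Fintype.card ι) → Fin d → Fin n → ℚ,
      ∑ x, ∏ j, lin (c x j) = ∑ i, ∏ j, lin (c' i j) :=
  ⟨c ∘ (Fintype.equivFin ι).symm, ((Fintype.equivFin ι).symm.sum_comp _).symm⟩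

end SumsOfProducts

theorem shad_sum_products_representation {n d s s' : ℕ}
    (a : Fin s → Fin d → Fin n → ℚ) (b : Fin s' → Fin d → Fin n → ℚ)
    (f g : MvPolynomial (Fin n) ℚ)
    (hf : f = ∑ i, ∏ j, lin (a i j)) (hg : g = ∑ i, ∏ j, lin (b i j)) :
    ∃ (t : ℕ) (c : Fin t → Fin d → Fin n → ℚ),
      t ≤ 2 ^ d * s * s' ∧ shad f g = ∑ i, ∏ j, lin (c i j) := by
  obtain ⟨c, hc⟩ := exists_fin_sum_prod_lin fun (x : Fin s × Fin s' × Finset (Fin d)) j =>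
    (if j ∈ x.2.2 then 1 else -1 : ℚ) • ((∑ i ∈ x.2.2, a x.1 i) * b x.2.1 j)
  refine ⟨_, c, by simp [mul_comm, mul_left_comm], ?_⟩
  rw [← hc, hf, hg, shad_sum_left, Fintype.sum_prod_type]
  refine sum_congr rfl fun i _ => ?_
  rw [shad_sum_right, Fintype.sum_prod_type]
  exact sum_congr rfl fun i' _ => shad_prod_lin_eq_sum_prod_lin (a i) (b i')
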